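/- Let f : [0, ∞) → ℝ be continuous with f(0) ≥ 0. Define k(t) := sup_{0 ≤ s ≤ t} max(−f(s), 0) and g(t) := f(t) + k(t). Then: (i) g(t) ≥ 0 for all t; (ii) k is continuous, nondecreasing, with k(0) = 0; (iii) k increases only on the set { t : g(t) = 0 }, i.e., ∫_0^∞ 1_{g(s) > 0} dk(s) = 0; and (iv) the pair (g, k) is the unique pair of functions satisfying (i)–(iii) with g = f + k. -/

import Mathlib

open Set Filter Topology

private lemma sk_aux_le (f k1 k2 : ℝ → ℝ)
    (h2nn : ∀ u, 0 ≤ u → 0 ≤ f u + k2 u)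
    (hm2 : MonotoneOn k2 (Ici 0))
    (hc1 : ContinuousOn k1 (Ici 0)) (hc2 : ContinuousOn k2 (Ici 0))
    (h10 : k1 0 = 0) (h20 : k2 0 = 0)
    (hflat1 : ∀ s t, 0 ≤ s → s ≤ t → (∀ u ∈ Icc s t, 0 < f u + k1 u) → k1 s = k1 t) :
    ∀ t, 0 ≤ t → k1 t ≤ k2 t := by
  intro t ht
  by_contra hcon
  push_neg at hcon
  set A : Set ℝ := {u | u ∈ Icc 0 t ∧ k1 u ≤ k2 u} with hA
  have h0A : (0:ℝ) ∈ A := ⟨⟨le_refl 0, ht⟩, by rw [h10, h20]⟩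
  have hAne : A.Nonempty := ⟨0, h0A⟩
  have hbdd : BddAbove A := ⟨t, fun u hu => hu.1.2⟩
  set s := sSup A with hsdef
  have hs0 : 0 ≤ s := le_csSup hbdd h0A
  have hst : s ≤ t := csSup_le hAne fun u hu => hu.1.2
  have hAI : A ⊆ Ici 0 := fun u hu => hu.1.1
  have hcl : s ∈ closure A := csSup_mem_closure hAne hbdd
  haveI hne1 : (𝓝[A] s).NeBot := mem_closure_iff_nhdsWithin_neBot.1 hcl
  have hks : k1 s ≤ k2 s := by
    have htend : Tendsto (fun u => k1 u - k2 u) (𝓝[A] s) (𝓝 (k1 s - k2 s)) :=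
      ((hc1.sub hc2) s hs0).mono hAI
    have hle : k1 s - k2 s ≤ 0 := le_of_tendsto htend (by
      filter_upwards [eventually_mem_nhdsWithin] with u hu
      exact sub_nonpos.2 hu.2)
    linarith
  have hslt : s < t := hst.lt_of_ne fun hst' => absurd (hst' ▸ hks) (not_le.2 hcon)
  have hpos : ∀ u ∈ Ioc s t, 0 < f u + k1 u := by
    intro u hu
    have hu0 : 0 ≤ u := hs0.trans hu.1.le
    have hnA : u ∉ A := fun hmem => absurd (le_csSup hbdd hmem) (not_le.2 hu.1)
    have h21 : k2 u < k1 u := by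
      by_contra hle; push_neg at hle
      exact hnA ⟨⟨hu0, hu.2⟩, hle⟩
    have := h2nn u hu0
    linarith
  have hflat : ∀ u ∈ Ioc s t, k1 u = k1 t := by
    intro u hu
    exact hflat1 u t (hs0.trans hu.1.le) hu.2 fun v hv =>
      hpos v ⟨hu.1.trans_le hv.1, hv.2⟩
  have hIoc : Ioc s t ⊆ Ici 0 := fun u hu => hs0.trans hu.1.le
  have hclI : s ∈ closure (Ioc s t) := by
    rw [closure_Ioc hslt.ne]
    exact ⟨le_refl s, hslt.le⟩
  haveI hne2 : (𝓝[Ioc s t] s).NeBot := mem_closure_iff_nhdsWithin_neBot.1 hclI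
  have h1 : Tendsto k1 (𝓝[Ioc s t] s) (𝓝 (k1 s)) :=
    (hc1 s hs0).mono hIoc
  have h2 : Tendsto k1 (𝓝[Ioc s t] s) (𝓝 (k1 t)) := by
    refine Tendsto.congr' ?_ tendsto_const_nhds
    filter_upwards [eventually_mem_nhdsWithin] with u hu
    exact (hflat u hu).symm
  have heq : k1 s = k1 t := tendsto_nhds_unique h1 h2
  have hfin : k2 s ≤ k2 t := hm2 hs0 ht hst
  linarith

/-- Deterministic Skorohod reflection lemma. Let `f : [0,∞) → ℝ` be continuous with
`f 0 ≥ 0`, let `k t = sup_{0 ≤ s ≤ t} max(-f s, 0)` and `g = f + k`. Then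
(i) `g ≥ 0`; (ii) `k` is continuous, nondecreasing with `k 0 = 0`;
(iii) `k` increases only on `{t : g t = 0}` (it is constant on intervals where `g > 0`);
(iv) `(g, k)` is the unique such pair with `g = f + k`. -/
theorem skorohod_reflection (f : ℝ → ℝ) (hf : ContinuousOn f (Ici 0)) (hf0 : 0 ≤ f 0)
    (k g : ℝ → ℝ)
    (hk : ∀ t, k t = sSup ((fun s => max (-f s) 0) '' Icc 0 t))
    (hg : ∀ t, g t = f t + k t) :
    (∀ t, 0 ≤ t → 0 ≤ g t) ∧
    (ContinuousOn k (Ici 0) ∧ MonotoneOn k (Ici 0) ∧ k 0 = 0) ∧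
    (∀ s t, 0 ≤ s → s ≤ t → (∀ u ∈ Icc s t, 0 < g u) → k s = k t) ∧
    (∀ g' k' : ℝ → ℝ,
      (∀ t, 0 ≤ t → g' t = f t + k' t) →
      (∀ t, 0 ≤ t → 0 ≤ g' t) →
      ContinuousOn k' (Ici 0) → MonotoneOn k' (Ici 0) → k' 0 = 0 →
      (∀ s t, 0 ≤ s → s ≤ t → (∀ u ∈ Icc s t, 0 < g' u) → k' s = k' t) →
      ∀ t, 0 ≤ t → g' t = g t ∧ k' t = k t) := by
  set h : ℝ → ℝ := fun s => max (-f s) 0 with hh_def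
  have hhc : ContinuousOn h (Ici 0) := fun x hx => ((hf x hx).neg).max continuousWithinAt_const
  have h00 : h 0 = 0 := max_eq_right (neg_nonpos.2 hf0)
  have hne : ∀ t : ℝ, 0 ≤ t → (h '' Icc 0 t).Nonempty :=
    fun t ht => ⟨h 0, mem_image_of_mem h ⟨le_refl 0, ht⟩⟩
  have hbdd : ∀ t : ℝ, 0 ≤ t → BddAbove (h '' Icc 0 t) := fun t ht =>
    ((isCompact_Icc).image_of_continuousOn (hhc.mono Icc_subset_Ici_self)).bddAbove
  have hle : ∀ t : ℝ, 0 ≤ t → ∀ u ∈ Icc (0:ℝ) t, h u ≤ k t := fun t ht u hu => by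
    rw [hk]; exact le_csSup (hbdd t ht) (mem_image_of_mem h hu)
  have k0 : k 0 = 0 := by rw [hk, Icc_self, image_singleton, csSup_singleton, h00]
  have kmono : MonotoneOn k (Ici 0) := by
    intro a ha b hb hab
    rw [hk, hk]
    exact csSup_le_csSup (hbdd b hb) (hne a ha) (image_mono (f := h) (Icc_subset_Icc_right hab))
  have knn : ∀ t, 0 ≤ t → 0 ≤ k t := by
    intro t ht
    have := kmono self_mem_Ici ht ht
    rwa [k0] at this
  have gnn : ∀ t, 0 ≤ t → 0 ≤ g t := by
    intro t ht
    have h1 : h t ≤ k t := hle t ht t ⟨ht, le_refl t⟩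
    have h2 : -f t ≤ h t := le_max_left _ _
    rw [hg]; linarith
  have kcont : ContinuousOn k (Ici 0) := by
    intro t ht
    rw [Metric.continuousWithinAt_iff]
    intro ε hε
    obtain ⟨δ, hδ, hδ'⟩ := Metric.continuousWithinAt_iff.1 (hhc t ht) (ε/4) (by positivity)
    refine ⟨δ, hδ, ?_⟩
    intro s hs hsd
    have hs' : (0:ℝ) ≤ s := hs
    have ht' : (0:ℝ) ≤ t := ht
    rcases le_total s t with hst | hst
    · have hks : k s ≤ k t := kmono hs ht hst
      have hkt : k t ≤ k s + ε/2 := by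
        rw [hk t]
        apply csSup_le (hne t ht')
        rintro x ⟨u, hu, rfl⟩
        rcases le_or_gt u s with hus | hus
        · have := hle s hs' u ⟨hu.1, hus⟩
          linarith
        · have hdu : dist u t < δ := by
            rw [Real.dist_eq] at hsd ⊢
            rw [abs_of_nonpos (by linarith [hu.2] : u - t ≤ 0)]
            rw [abs_of_nonpos (by linarith : s - t ≤ 0)] at hsd
            linarith
          have h1 := hδ' (mem_Ici.2 hu.1) hdu
          have h2 := hδ' (mem_Ici.2 hs') hsd
          rw [Real.dist_eq] at h1 h2
          have h1' := abs_lt.1 h1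
          have h2' := abs_lt.1 h2
          have h3 : h s ≤ k s := hle s hs' s ⟨hs', le_refl s⟩
          linarith [h1'.2, h2'.1]
      rw [Real.dist_eq, abs_of_nonpos (by linarith : k s - k t ≤ 0)]
      linarith
    · have hks : k t ≤ k s := kmono ht hs hst
      have hkt : k s ≤ k t + ε/2 := by
        rw [hk s]
        apply csSup_le (hne s hs')
        rintro x ⟨u, hu, rfl⟩
        rcases le_or_gt u t with hut | hut
        · have := hle t ht' u ⟨hu.1, hut⟩
          linarith
        · have hdu : dist u t < δ := by
            rw [Real.dist_eq] at hsd ⊢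
            rw [abs_of_nonneg (by linarith : (0:ℝ) ≤ u - t)]
            rw [abs_of_nonneg (by linarith : (0:ℝ) ≤ s - t)] at hsd
            linarith [hu.2]
          have h1 := hδ' (mem_Ici.2 hu.1) hdu
          rw [Real.dist_eq] at h1
          have h1' := abs_lt.1 h1
          have h3 : h t ≤ k t := hle t ht' t ⟨ht', le_refl t⟩
          linarith [h1'.2]
      rw [Real.dist_eq, abs_of_nonneg (by linarith : (0:ℝ) ≤ k s - k t)]
      linarith
  have kflat : ∀ a b, 0 ≤ a → a ≤ b → (∀ u ∈ Icc a b, 0 < g u) → k a = k b := by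
    intro a b ha hab hpos
    have hb : 0 ≤ b := ha.trans hab
    refine le_antisymm (kmono ha hb hab) ?_
    obtain ⟨u, hu, hmax⟩ := isCompact_Icc.exists_isMaxOn ⟨0, le_refl 0, hb⟩
      (hhc.mono Icc_subset_Ici_self)
    have hkb : k b = h u := by
      rw [hk b]
      exact IsGreatest.csSup_eq ⟨mem_image_of_mem h hu, by rintro x ⟨v, hv, rfl⟩; exact hmax hv⟩
    rcases le_or_gt u a with hua | hua
    · rw [hkb]; exact hle a ha u ⟨hu.1, hua⟩
    · have hu0 : 0 ≤ u := hu.1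
      have hku : k u = h u := by
        refine le_antisymm ?_ (hle u hu0 u ⟨hu0, le_refl u⟩)
        rw [← hkb]; exact kmono hu0 hb hu.2
      have hgu : 0 < g u := hpos u ⟨hua.le, hu.2⟩
      rw [hg, hku] at hgu
      have hhu : h u = 0 := by
        rcases le_or_gt (-f u) 0 with h1 | h1
        · exact max_eq_right h1
        · have heq : h u = -f u := max_eq_left h1.le
          rw [heq] at hgu; linarith
      rw [hkb, hhu]; exact knn a ha
  refine ⟨gnn, ⟨kcont, kmono, k0⟩, kflat, ?_⟩
  intro g' k' hg' hg'nn hc' hm' hk'0 hflat' t ht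
  have flat1 : ∀ a b, 0 ≤ a → a ≤ b → (∀ u ∈ Icc a b, 0 < f u + k' u) → k' a = k' b := by
    intro a b ha hab hp
    exact hflat' a b ha hab fun u hu => by
      rw [hg' u (ha.trans hu.1)]; exact hp u hu
  have flat2 : ∀ a b, 0 ≤ a → a ≤ b → (∀ u ∈ Icc a b, 0 < f u + k u) → k a = k b := by
    intro a b ha hab hp
    exact kflat a b ha hab fun u hu => by rw [hg u]; exact hp u hu
  have nn2 : ∀ u, 0 ≤ u → 0 ≤ f u + k u := fun u hu => by rw [← hg u]; exact gnn u hu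
  have nn1 : ∀ u, 0 ≤ u → 0 ≤ f u + k' u := fun u hu => by rw [← hg' u hu]; exact hg'nn u hu
  have le1 := sk_aux_le f k' k nn2 kmono hc' kcont hk'0 k0 flat1 t ht
  have le2 := sk_aux_le f k k' nn1 hm' kcont hc' k0 hk'0 flat2 t ht
  have hkk : k' t = k t := le_antisymm le1 le2
  exact ⟨by rw [hg' t ht, hg t, hkk], hkk⟩
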